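/- arXiv:2503.15442 — 7 statements merged into one kernel-verified Lean document; each statement's English description precedes it below -/
import Mathlib

section
/- Let A and B be finite sequences of reals and δ > 0. Every δ-almost increasing common subsequence S of A and B can be split as S = S' ∘ S'' where, for any fixed split point of A into A[1..i] and A[i+1..n], there exists j with 0 ≤ j ≤ m such that S' is a δ-almost increasing common subsequence of A[1..i] and B[1..j], S'' is a δ-almost increasing common subsequence of A[i+1..n] and B[j+1..m], and (max of S') < (min of S'') + δ whenever both parts are nonempty. -/
open List

def DeltaAlmostIncreasing (δ : ℝ) (l : List ℝ) : Prop :=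
  l.Pairwise fun a b => b + δ > a

/- Split S along A = A[1..i] ++ A[i+1..n]; the embedding of S = S' ++ S'' into B then
places S' inside some prefix B[1..j] and S'' inside the remaining suffix, and the cross
condition of `Pairwise` on S' ++ S'' applied to the maximum of S' and the minimum of S''
gives the inequality between the two parts. -/

namespace List

variable {α : Type*}

theorem unbotD_maximum_mem [LinearOrder α] {l : List α} (h : l ≠ []) (d : α) :
    l.maximum.unbotD d ∈ l := by
  obtain ⟨x, hx⟩ := WithBot.ne_bot_iff_exists.mp (maximum_ne_bot_of_ne_nil h)
  rw [← hx, WithBot.unbotD_coe]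
  exact maximum_mem hx.symm

theorem untopD_minimum_mem [LinearOrder α] {l : List α} (h : l ≠ []) (d : α) :
    l.minimum.untopD d ∈ l := by
  obtain ⟨x, hx⟩ := WithTop.ne_top_iff_exists.mp (minimum_ne_top_of_ne_nil h)
  rw [← hx, WithTop.untopD_coe]
  exact minimum_mem hx.symm

theorem Sublist.exists_split_along_append {S L₁ L₂ B : List α}
    (hSL : S <+ L₁ ++ L₂) (hSB : S <+ B) :
    ∃ j ≤ B.length, ∃ S₁ S₂ : List α, S = S₁ ++ S₂ ∧
      S₁ <+ L₁ ∧ S₁ <+ B.take j ∧ S₂ <+ L₂ ∧ S₂ <+ B.drop j := by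
  obtain ⟨S₁, S₂, rfl, hL₁, hL₂⟩ := sublist_append_iff.mp hSL
  obtain ⟨B₁, B₂, rfl, hB₁, hB₂⟩ := append_sublist_iff.mp hSB
  refine ⟨B₁.length, by simp, S₁, S₂, rfl, hL₁, ?_, hL₂, ?_⟩
  · rwa [take_left]
  · rwa [drop_left]

end List

theorem deltaAlmostIncreasing_append {δ : ℝ} {l₁ l₂ : List ℝ} :
    DeltaAlmostIncreasing δ (l₁ ++ l₂) ↔
      DeltaAlmostIncreasing δ l₁ ∧ DeltaAlmostIncreasing δ l₂ ∧
        ∀ a ∈ l₁, ∀ b ∈ l₂, b + δ > a :=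
  pairwise_append

theorem stmt_7_general (δ : ℝ) (A B S : List ℝ)
    (hSA : S <+ A) (hSB : S <+ B) (hS : DeltaAlmostIncreasing δ S)
    (i : ℕ) :
    ∃ j ≤ B.length, ∃ S' S'' : List ℝ,
      S = S' ++ S'' ∧
      S' <+ A.take i ∧ S' <+ B.take j ∧ DeltaAlmostIncreasing δ S' ∧
      S'' <+ A.drop i ∧ S'' <+ B.drop j ∧ DeltaAlmostIncreasing δ S'' ∧
      (S' ≠ [] → S'' ≠ [] → WithBot.unbotD 0 S'.maximum < WithTop.untopD 0 S''.minimum + δ) := by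
  rw [← take_append_drop i A] at hSA
  obtain ⟨j, hj, S', S'', rfl, hA₁, hB₁, hA₂, hB₂⟩ := hSA.exists_split_along_append hSB
  obtain ⟨hS', hS'', hcross⟩ := deltaAlmostIncreasing_append.mp hS
  exact ⟨j, hj, S', S'', rfl, hA₁, hB₁, hS', hA₂, hB₂, hS'', fun h₁ h₂ =>
    hcross _ (unbotD_maximum_mem h₁ 0) _ (untopD_minimum_mem h₂ 0)⟩

/-- every δ-almost increasing common subsequence S of A and B splits as
S = S' ++ S'' across any fixed split A = A[1..i] ∘ A[i+1..n], for some 0 ≤ j ≤ m,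
with S' a δ-a.i. common subsequence of A[1..i], B[1..j], S'' one of A[i+1..n], B[j+1..m],
and max S' < min S'' + δ when both are nonempty. -/
theorem stmt_7 (δ : ℝ) (hδ : 0 < δ) (A B S : List ℝ)
    (hSA : S <+ A) (hSB : S <+ B) (hS : DeltaAlmostIncreasing δ S)
    (i : ℕ) (hi : i ≤ A.length) :
    ∃ j ≤ B.length, ∃ S' S'' : List ℝ,
      S = S' ++ S'' ∧
      S' <+ A.take i ∧ S' <+ B.take j ∧ DeltaAlmostIncreasing δ S' ∧
      S'' <+ A.drop i ∧ S'' <+ B.drop j ∧ DeltaAlmostIncreasing δ S'' ∧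
      (S' ≠ [] → S'' ≠ [] → WithBot.unbotD 0 S'.maximum < WithTop.untopD 0 S''.minimum + δ) :=
  stmt_7_general δ A B S hSA hSB hS i
end

section
/- Let A and B be finite sequences of reals and δ > 0, and let 0 ≤ i ≤ n be a split index for A. Then the maximum length of a δ-almost increasing common subsequence of A and B equals the maximum, over all j with 0 ≤ j ≤ m and all pairs (S', S'') where S' is a δ-almost increasing common subsequence of A[1..i] and B[1..j], S'' is a δ-almost increasing common subsequence of A[i+1..n] and B[j+1..m], and (either one of S', S'' is empty or max(S') < min(S'') + δ), of |S'| + |S''|. -/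
/-! A δ-almost increasing common subsequence of `A` and `B` splits as `S' ++ S''` with `S'` taken
from `A.take i` and `S''` from `A.drop i`; the same split point of `S` cuts `B` at some `j`. The
pairs across the cut satisfy `a < b + δ` exactly when `max S' < min S'' + δ`, so concatenation and
splitting are inverse to each other and the two sets of lengths coincide. -/

open List

namespace List

variable {α : Type*}

theorem exists_take_drop_of_append_sublist {l₁ l₂ r : List α} (h : l₁ ++ l₂ <+ r) :
    ∃ j ≤ r.length, l₁ <+ r.take j ∧ l₂ <+ r.drop j := by
  obtain ⟨r₁, r₂, rfl, h₁, h₂⟩ := append_sublist_iff.mp h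
  exact ⟨r₁.length, by simp, by simpa using h₁, by simpa using h₂⟩

variable [LinearOrder α] {l : List α}

theorem maximum_eq_coe_unbotD (h : l ≠ []) (d : α) : l.maximum = (l.maximum.unbotD d : α) := by
  obtain ⟨m, hm⟩ := WithBot.ne_bot_iff_exists.mp (maximum_ne_bot_of_ne_nil h)
  rw [← hm, WithBot.unbotD_coe]

theorem minimum_eq_coe_untopD (h : l ≠ []) (d : α) : l.minimum = (l.minimum.untopD d : α) := by
  obtain ⟨m, hm⟩ := WithTop.ne_top_iff_exists.mp (minimum_ne_top_of_ne_nil h)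
  rw [← hm, WithTop.untopD_coe]

end List

theorem forall_mem_lt_add_iff_maximum_lt_minimum_add {S T : List ℝ} (hS : S ≠ []) (hT : T ≠ [])
    (d d' δ : ℝ) :
    (∀ a ∈ S, ∀ b ∈ T, a < b + δ) ↔ S.maximum.unbotD d < T.minimum.untopD d' + δ := by
  obtain ⟨hmax_mem, hle_max⟩ := maximum_eq_coe_iff.mp (maximum_eq_coe_unbotD hS d)
  obtain ⟨hmin_mem, hmin_le⟩ := minimum_eq_coe_iff.mp (minimum_eq_coe_untopD hT d')
  refine ⟨fun h => h _ hmax_mem _ hmin_mem, fun h a ha b hb => ?_⟩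
  linarith [hle_max a ha, hmin_le b hb]

theorem deltaAlmostIncreasing_append_iff {δ : ℝ} {S T : List ℝ} :
    DeltaAlmostIncreasing δ (S ++ T) ↔
      DeltaAlmostIncreasing δ S ∧ DeltaAlmostIncreasing δ T ∧
        (S = [] ∨ T = [] ∨ S.maximum.unbotD 0 < T.minimum.untopD 0 + δ) := by
  unfold DeltaAlmostIncreasing
  rw [pairwise_append]
  refine and_congr_right fun _ => and_congr_right fun _ => ?_
  rcases eq_or_ne S [] with rfl | hS
  · simp
  rcases eq_or_ne T [] with rfl | hT
  · simp
  simp only [hS, hT, false_or, gt_iff_lt]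
  exact forall_mem_lt_add_iff_maximum_lt_minimum_add hS hT 0 0 δ

theorem stmt_8_general (δ : ℝ) (A B : List ℝ) (i : ℕ) :
    sSup {k : ℕ | ∃ S : List ℝ, S.length = k ∧ S <+ A ∧ S <+ B ∧
        DeltaAlmostIncreasing δ S} =
    sSup {k : ℕ | ∃ j ≤ B.length, ∃ S' S'' : List ℝ,
        S' <+ A.take i ∧ S' <+ B.take j ∧ DeltaAlmostIncreasing δ S' ∧
        S'' <+ A.drop i ∧ S'' <+ B.drop j ∧ DeltaAlmostIncreasing δ S'' ∧
        (S' = [] ∨ S'' = [] ∨ S'.maximum.unbotD 0 < S''.minimum.untopD 0 + δ) ∧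
        k = S'.length + S''.length} := by
  congr 1
  ext k
  constructor
  · rintro ⟨S, rfl, hSA, hSB, hS⟩
    rw [← take_append_drop i A, sublist_append_iff] at hSA
    obtain ⟨S', S'', rfl, hA', hA''⟩ := hSA
    obtain ⟨j, hj, hB', hB''⟩ := exists_take_drop_of_append_sublist hSB
    obtain ⟨hS', hS'', hcompat⟩ := deltaAlmostIncreasing_append_iff.mp hS
    exact ⟨j, hj, S', S'', hA', hB', hS', hA'', hB'', hS'', hcompat, length_append⟩
  · rintro ⟨j, -, S', S'', hA', hB', hS', hA'', hB'', hS'', hcompat, rfl⟩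
    refine ⟨S' ++ S'', length_append, ?_, ?_,
      deltaAlmostIncreasing_append_iff.mpr ⟨hS', hS'', hcompat⟩⟩
    · simpa using hA'.append hA''
    · simpa using hB'.append hB''

/-- Lemma 2: for any split index 0 ≤ i ≤ n, the maximum length of a
δ-almost increasing common subsequence of A and B equals the maximum over 0 ≤ j ≤ m and
pairs (S', S'') of compatible δ-a.i. common subsequences of the corresponding prefix/suffix
pairs of |S'| + |S''|. -/
theorem stmt_8 (δ : ℝ) (hδ : 0 < δ) (A B : List ℝ) (i : ℕ) (hi : i ≤ A.length) :
    sSup {k : ℕ | ∃ S : List ℝ, S.length = k ∧ S <+ A ∧ S <+ B ∧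
        DeltaAlmostIncreasing δ S} =
    sSup {k : ℕ | ∃ j ≤ B.length, ∃ S' S'' : List ℝ,
        S' <+ A.take i ∧ S' <+ B.take j ∧ DeltaAlmostIncreasing δ S' ∧
        S'' <+ A.drop i ∧ S'' <+ B.drop j ∧ DeltaAlmostIncreasing δ S'' ∧
        (S' = [] ∨ S'' = [] ∨ S'.maximum.unbotD 0 < S''.minimum.untopD 0 + δ) ∧
        k = S'.length + S''.length} :=
  stmt_8_general δ A B i
end

section
/- Fix δ > 0 and sequences A, B. Suppose S' is a δ-almost increasing common subsequence of A[1..i] and B[1..j] of length r' whose maximum element is the minimum possible over all such subsequences of length r' (call it Y'), and S'' is a δ-almost increasing common subsequence of A[i+1..n] and B[j+1..m] of length r'' whose minimum element is the maximum possible over all such subsequences of length r'' (call it Y''). If Y'' + δ > Y', then there exists a δ-almost increasing common subsequence of A and B of length r' + r''. -/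
open List

/-- if S' is a δ-a.i. common subsequence of A[1..i], B[1..j] of length r'
with the minimum possible maximum element Y', and S'' is a δ-a.i. common subsequence of
A[i+1..n], B[j+1..m] of length r'' with the maximum possible minimum element Y'', and
Y'' + δ > Y', then A and B have a δ-a.i. common subsequence of length r' + r''. -/
theorem stmt_9 (δ : ℝ) (hδ : 0 < δ) (A B : List ℝ) (i j r' r'' : ℕ)
    (hr' : 0 < r') (hr'' : 0 < r'') (Y' Y'' : ℝ) (S' S'' : List ℝ)
    (hS'A : S' <+ A.take i) (hS'B : S' <+ B.take j) (hS' : DeltaAlmostIncreasing δ S')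
    (hS'len : S'.length = r') (hY' : S'.maximum = (Y' : WithBot ℝ))
    (hY'min : ∀ T : List ℝ, T <+ A.take i → T <+ B.take j → DeltaAlmostIncreasing δ T →
      T.length = r' → (Y' : WithBot ℝ) ≤ T.maximum)
    (hS''A : S'' <+ A.drop i) (hS''B : S'' <+ B.drop j) (hS'' : DeltaAlmostIncreasing δ S'')
    (hS''len : S''.length = r'') (hY'' : S''.minimum = (Y'' : WithTop ℝ))
    (hY''max : ∀ T : List ℝ, T <+ A.drop i → T <+ B.drop j → DeltaAlmostIncreasing δ T →
      T.length = r'' → T.minimum ≤ (Y'' : WithTop ℝ))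
    (hcomp : Y'' + δ > Y') :
    ∃ S : List ℝ, S <+ A ∧ S <+ B ∧ DeltaAlmostIncreasing δ S ∧ S.length = r' + r'' := by
  refine ⟨S' ++ S'', ?_, ?_, ?_, by simp [hS'len, hS''len]⟩
  · have := Sublist.append hS'A hS''A
    simpa using this
  · have := Sublist.append hS'B hS''B
    simpa using this
  · unfold DeltaAlmostIncreasing at *
    rw [List.pairwise_append]
    refine ⟨hS', hS'', fun a ha b hb => ?_⟩
    have ha' : (a : WithBot ℝ) ≤ S'.maximum := List.le_maximum_of_mem' ha
    rw [hY'] at ha'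
    have haY : a ≤ Y' := by exact_mod_cast ha'
    have hb' : S''.minimum ≤ (b : WithTop ℝ) := List.minimum_le_of_mem' hb
    rw [hY''] at hb'
    have hbY : Y'' ≤ b := by exact_mod_cast hb'
    linarith
end

section
/- Let A[1..i] and B[1..m] be sequences with A[i] = B[j] and r ≥ 2. Define Q'(i−1, k, r−1) as the minimum possible largest element over all δ-almost increasing common subsequences of A[1..i−1] and B[1..k] of length r−1 ending at position k of B (∞ if none exist). Then there exists a δ-almost increasing common subsequence of A[1..i] and B[1..j] of length r ending at position j of B if and only if there exists k with 1 ≤ k < j such that a length-(r−1) such subsequence ending at position k exists and A[i] + δ > Q'(i−1, k, r−1). -/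
open List

def ExistsDAICSEndingAt (δ : ℝ) (X B : List ℝ) (j r : ℕ) : Prop :=
  ∃ S₀ : List ℝ, (S₀ ++ [B[j-1]!]).length = r ∧
    DeltaAlmostIncreasing δ (S₀ ++ [B[j-1]!]) ∧
    (S₀ ++ [B[j-1]!]) <+ X ∧ S₀ <+ B.take (j-1)

/-- Q'(i,k,r): the minimum possible largest element (as an extended real, ⊤ if no such
subsequence exists) over all δ-a.i. common subsequences of A[1..i] and B[1..k] of length r
ending at position k of B. -/
noncomputable def Qp (δ : ℝ) (A B : List ℝ) (i k r : ℕ) : EReal :=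
  sInf {w : EReal | ∃ S₀ : List ℝ, (S₀ ++ [B[k-1]!]).length = r ∧
    DeltaAlmostIncreasing δ (S₀ ++ [B[k-1]!]) ∧
    (S₀ ++ [B[k-1]!]) <+ A.take i ∧ S₀ <+ B.take (k-1) ∧
    ∀ x ∈ S₀ ++ [B[k-1]!], (x : EReal) ≤ w}

/- Write a witness of the left side as `S ++ [B[k]] ++ [B[j]]`, splitting off the matched
pair A[i] = B[j] and the previous element B[k]. Appending `b` to a δ-almost increasing list
keeps it δ-almost increasing iff all its elements, i.e. its maximum, are `< b + δ`; and
Q'(i-1, k, r-1) < b + δ iff some witness `S ++ [B[k]]` has maximum `< b + δ`, since Q' is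
an infimum of maxima of finite lists. -/

section Sublist

variable {α : Type*}

theorem exists_getElem_eq_of_append_singleton_sublist {l L : List α} {y : α}
    (h : l ++ [y] <+ L) : ∃ n, ∃ hn : n < L.length, L[n] = y ∧ l <+ L.take n := by
  obtain ⟨L₁, L₂, rfl, h₁, h₂⟩ := append_sublist_iff.mp h
  obtain ⟨s, t, rfl⟩ := append_of_mem (singleton_sublist.mp h₂)
  refine ⟨L₁.length + s.length, by simp, ?_, ?_⟩
  · simp [getElem_append_right]
  · simpa [take_append, take_of_length_le] using h₁.trans (sublist_append_left L₁ s)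

theorem append_singleton_sublist_take_iff {l L : List α} {y : α} {m : ℕ} :
    l ++ [y] <+ L.take m ↔ ∃ n < m, ∃ hn : n < L.length, L[n] = y ∧ l <+ L.take n := by
  constructor
  · intro h
    obtain ⟨n, hn, rfl, hl⟩ := exists_getElem_eq_of_append_singleton_sublist h
    rw [length_take] at hn
    refine ⟨n, by omega, by omega, getElem_take.symm, ?_⟩
    rwa [take_take, min_eq_left (by omega)] at hl
  · rintro ⟨n, hnm, hn, rfl, hl⟩
    exact ((append_sublist_append_right [L[n]]).mpr hl).trans
      (take_concat_get' L n hn ▸ take_sublist_take_left hnm)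

theorem take_eq_take_pred_append_getElem! [Inhabited α] (L : List α) {i : ℕ} (hi : 1 ≤ i)
    (hiL : i ≤ L.length) : L.take i = L.take (i - 1) ++ [L[i - 1]!] := by
  obtain ⟨n, rfl⟩ := Nat.exists_eq_add_of_le' hi
  simp [getElem!_pos L n (by omega)]

end Sublist

theorem deltaAlmostIncreasing_append_singleton_iff {δ b : ℝ} {l : List ℝ} :
    DeltaAlmostIncreasing δ (l ++ [b]) ↔ DeltaAlmostIncreasing δ l ∧ ∀ a ∈ l, a < b + δ := by
  simp [DeltaAlmostIncreasing, pairwise_append]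

def IsDAICSEndingAt (δ : ℝ) (X B : List ℝ) (k r : ℕ) (S₀ : List ℝ) : Prop :=
  (S₀ ++ [B[k-1]!]).length = r ∧ DeltaAlmostIncreasing δ (S₀ ++ [B[k-1]!]) ∧
    S₀ ++ [B[k-1]!] <+ X ∧ S₀ <+ B.take (k-1)

theorem Qp_lt_coe_iff {δ x : ℝ} {A B : List ℝ} {i k r : ℕ} :
    Qp δ A B i k r < x ↔
      ∃ S₀, IsDAICSEndingAt δ (A.take i) B k r S₀ ∧ ∀ y ∈ S₀ ++ [B[k-1]!], y < x := by
  constructor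
  · rw [Qp, sInf_lt_iff]
    rintro ⟨w, ⟨S₀, hlen, hdai, hA, hB, hle⟩, hw⟩
    exact ⟨S₀, ⟨hlen, hdai, hA, hB⟩, fun y hy =>
      EReal.coe_lt_coe_iff.mp ((hle y hy).trans_lt hw)⟩
  · rintro ⟨S₀, ⟨hlen, hdai, hA, hB⟩, hlt⟩
    let w : EReal := (S₀ ++ [B[k-1]!]).toFinset.sup fun y : ℝ => (y : EReal)
    have hw : w < x := (Finset.sup_lt_iff (EReal.bot_lt_coe x)).mpr fun y hy =>
      EReal.coe_lt_coe_iff.mpr (hlt y (mem_toFinset.mp hy))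
    have hle : ∀ y ∈ S₀ ++ [B[k-1]!], (y : EReal) ≤ w := fun y hy =>
      Finset.le_sup (f := fun y : ℝ => (y : EReal)) (mem_toFinset.mpr hy)
    exact lt_of_le_of_lt (sInf_le ⟨S₀, hlen, hdai, hA, hB, hle⟩) hw

theorem existsDAICSEndingAt_append_iff {δ : ℝ} {X B : List ℝ} {j r : ℕ} (hr : 2 ≤ r)
    (hjB : j ≤ B.length) :
    ExistsDAICSEndingAt δ (X ++ [B[j-1]!]) B j r ↔
      ∃ k, 1 ≤ k ∧ k < j ∧ ∃ S₀, IsDAICSEndingAt δ X B k (r - 1) S₀ ∧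
        ∀ y ∈ S₀ ++ [B[k-1]!], y < B[j-1]! + δ := by
  constructor
  · rintro ⟨S, hlen, hdai, hX, hB⟩
    obtain ⟨S₀, y, rfl⟩ : ∃ S₀ y, S = S₀ ++ [y] := by
      rcases eq_nil_or_concat S with rfl | ⟨S₀, y, rfl⟩
      · simp at hlen; omega
      · exact ⟨S₀, y, by simp⟩
    obtain ⟨n, hnj, hn, rfl, hS₀⟩ := append_singleton_sublist_take_iff.mp hB
    rw [deltaAlmostIncreasing_append_singleton_iff] at hdai
    refine ⟨n + 1, by omega, by omega, S₀, ?_⟩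
    simp only [IsDAICSEndingAt, Nat.add_sub_cancel, getElem!_pos B n hn]
    exact ⟨⟨by simp at hlen ⊢; omega, hdai.1, (append_sublist_append_right _).mp hX, hS₀⟩,
      hdai.2⟩
  · rintro ⟨k, hk, hkj, S₀, ⟨hlen, hdai, hX, hB⟩, hlt⟩
    refine ⟨S₀ ++ [B[k-1]!], by simp at hlen ⊢; omega,
      deltaAlmostIncreasing_append_singleton_iff.mpr ⟨hdai, hlt⟩,
      (append_sublist_append_right _).mpr hX, ?_⟩
    rw [getElem!_pos B (k - 1) (by omega)]
    exact append_singleton_sublist_take_iff.mpr ⟨k - 1, by omega, by omega, rfl, hB⟩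

theorem stmt_11_general (δ : ℝ) (A B : List ℝ) (i j r : ℕ)
    (hi1 : 1 ≤ i) (hiA : i ≤ A.length) (hjB : j ≤ B.length)
    (heq : A[i-1]! = B[j-1]!) (hr : 2 ≤ r) :
    ExistsDAICSEndingAt δ (A.take i) B j r ↔
    ∃ k, 1 ≤ k ∧ k < j ∧ ExistsDAICSEndingAt δ (A.take (i-1)) B k (r-1) ∧
      ((A[i-1]! : EReal) + (δ : EReal) > Qp δ A B (i-1) k (r-1)) := by
  rw [take_eq_take_pred_append_getElem! A hi1 hiA, heq, existsDAICSEndingAt_append_iff hr hjB]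
  refine exists_congr fun k => and_congr_right fun _ => and_congr_right fun _ => ?_
  rw [gt_iff_lt, ← EReal.coe_add, Qp_lt_coe_iff]
  exact ⟨fun ⟨S₀, hS₀, hlt⟩ => ⟨⟨S₀, hS₀⟩, S₀, hS₀, hlt⟩, fun h => h.2⟩

/-- Lemma 1, matching case, existence: if A[i] = B[j] and r ≥ 2, then a
δ-a.i. common subsequence of A[1..i] and B[1..j] of length r ending at position j exists
iff there is 1 ≤ k < j with a length-(r−1) one ending at position k for A[1..i−1]
with A[i] + δ > Q'(i−1, k, r−1). -/
theorem stmt_11 (δ : ℝ) (hδ : 0 < δ) (A B : List ℝ) (i j r : ℕ)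
    (hi1 : 1 ≤ i) (hiA : i ≤ A.length) (hj1 : 1 ≤ j) (hjB : j ≤ B.length)
    (heq : A[i-1]! = B[j-1]!) (hr : 2 ≤ r) :
    ExistsDAICSEndingAt δ (A.take i) B j r ↔
    ∃ k, 1 ≤ k ∧ k < j ∧ ExistsDAICSEndingAt δ (A.take (i-1)) B k (r-1) ∧
      ((A[i-1]! : EReal) + (δ : EReal) > Qp δ A B (i-1) k (r-1)) :=
  stmt_11_general δ A B i j r hi1 hiA hjB heq hr
end

section
/- Let G be the directed graph on matching pairs of A and B, whose vertices are pairs (i, j) with A[i] = B[j], and which has an edge from (i, j) to (i', j') iff i < i', j < j', and B[j'] + δ > B[j]. Then δ-almost-increasing common subsequences of A and B of length k ≥ 1 correspond exactly to directed paths in G visiting k vertices. -/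
open List

/-!
A common subsequence `S` of `A` and `B` comes with strictly increasing index maps `f`, `g` with
`A[f t] = S[t] = B[g t]`, i.e. with the chain of matching pairs `(f t, g t)`. Conversely, the values
`B[j]` read along a chain of matching pairs are a subsequence of `B` through the second coordinates
and of `A` through the first ones. Since `S[t] = B[j_t]`, any condition on the values of `S` is the
same condition on `B` along the chain.
-/

namespace List

variable {α : Type*} [Inhabited α]

theorem map_getElem!_sublist {L : List α} {is : List ℕ} (hlt : is.Pairwise (· < ·))
    (hbound : ∀ i ∈ is, i < L.length) : is.map (fun i => L[i]!) <+ L := by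
  rw [sublist_iff_exists_fin_orderEmbedding_get_eq]
  have hlen : (is.map fun i => L[i]!).length = is.length := length_map _
  let f (t : Fin (is.map fun i => L[i]!).length) : Fin L.length :=
    ⟨is[t.cast hlen], hbound _ (getElem_mem _)⟩
  have hf : StrictMono f := fun s t hst =>
    pairwise_iff_getElem.mp hlt _ _ (s.cast hlen).isLt (t.cast hlen).isLt hst
  refine ⟨OrderEmbedding.ofStrictMono f hf, fun t => ?_⟩
  simp only [OrderEmbedding.coe_ofStrictMono, get_eq_getElem, getElem_map]
  exact getElem!_pos L _ (f t).isLt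

theorem Sublist.exists_strictMono_getElem!_eq {S L : List α} (h : S <+ L) :
    ∃ f : Fin S.length → ℕ, StrictMono f ∧ ∀ t, f t < L.length ∧ L[f t]! = S[t] := by
  obtain ⟨f, hf⟩ := sublist_iff_exists_fin_orderEmbedding_get_eq.mp h
  refine ⟨fun t => f t, fun s t hst => f.strictMono hst, fun t => ⟨(f t).isLt, ?_⟩⟩
  simpa [getElem!_pos L (f t : ℕ) (f t).isLt] using (hf t).symm

theorem exists_common_sublist_pairwise_iff (R : α → α → Prop) (A B : List α) (k : ℕ) :
    (∃ S : List α, S.length = k ∧ S <+ A ∧ S <+ B ∧ S.Pairwise R) ↔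
    (∃ p : List (ℕ × ℕ), p.length = k ∧
      (∀ q ∈ p, q.1 < A.length ∧ q.2 < B.length ∧ A[q.1]! = B[q.2]!) ∧
      p.Pairwise (fun q q' => q.1 < q'.1 ∧ q.2 < q'.2 ∧ R B[q.2]! B[q'.2]!)) := by
  constructor
  · rintro ⟨S, rfl, hSA, hSB, hS⟩
    obtain ⟨f, hf, hfA⟩ := hSA.exists_strictMono_getElem!_eq
    obtain ⟨g, hg, hgB⟩ := hSB.exists_strictMono_getElem!_eq
    refine ⟨ofFn fun t => (f t, g t), length_ofFn, ?_, pairwise_ofFn.mpr fun s t hst => ?_⟩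
    · intro q hq
      obtain ⟨t, rfl⟩ := mem_ofFn.mp hq
      exact ⟨(hfA t).1, (hgB t).1, (hfA t).2.trans (hgB t).2.symm⟩
    · refine ⟨hf hst, hg hst, ?_⟩
      rw [(hgB s).2, (hgB t).2]
      exact pairwise_iff_getElem.mp hS _ _ _ _ hst
  · rintro ⟨p, rfl, hmatch, hchain⟩
    refine ⟨p.map fun q => B[q.2]!, length_map _, ?_, ?_, pairwise_map.mpr ?_⟩
    · have hS : (p.map fun q => B[q.2]!) = (p.map Prod.fst).map fun i => A[i]! := by
        rw [map_map]
        exact map_congr_left fun q hq => ((hmatch q hq).2.2).symm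
      rw [hS]
      refine map_getElem!_sublist (pairwise_map.mpr (hchain.imp And.left)) ?_
      exact forall_mem_map.mpr fun q hq => (hmatch q hq).1
    · rw [show (p.map fun q => B[q.2]!) = (p.map Prod.snd).map fun j => B[j]! from map_map.symm]
      refine map_getElem!_sublist (pairwise_map.mpr (hchain.imp fun h => h.2.1)) ?_
      exact forall_mem_map.mpr fun q hq => (hmatch q hq).2.1
    · exact hchain.imp fun h => h.2.2

end List

theorem stmt_14_general (δ : ℝ) (A B : List ℝ) (k : ℕ) :
    (∃ S : List ℝ, S.length = k ∧ S <+ A ∧ S <+ B ∧ DeltaAlmostIncreasing δ S) ↔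
    (∃ p : List (ℕ × ℕ), p.length = k ∧
      (∀ q ∈ p, q.1 < A.length ∧ q.2 < B.length ∧ A[q.1]! = B[q.2]!) ∧
      p.Pairwise (fun q q' => q.1 < q'.1 ∧ q.2 < q'.2 ∧ B[q'.2]! + δ > B[q.2]!)) :=
  exists_common_sublist_pairwise_iff (fun a b => b + δ > a) A B k

/-- for k ≥ 1, δ-almost-increasing common subsequences of A and B of
length k correspond exactly to sequences of k matching pairs, pairwise strictly
increasing in both coordinates and satisfying B[j_t] + δ > B[j_s] for s < t
(i.e. directed paths on k vertices in the graph G). -/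
theorem stmt_14 (δ : ℝ) (hδ : 0 < δ) (A B : List ℝ) (k : ℕ) (hk : 1 ≤ k) :
    (∃ S : List ℝ, S.length = k ∧ S <+ A ∧ S <+ B ∧ DeltaAlmostIncreasing δ S) ↔
    (∃ p : List (ℕ × ℕ), p.length = k ∧
      (∀ q ∈ p, q.1 < A.length ∧ q.2 < B.length ∧ A[q.1]! = B[q.2]!) ∧
      p.Pairwise (fun q q' => q.1 < q'.1 ∧ q.2 < q'.2 ∧ B[q'.2]! + δ > B[q.2]!)) :=
  stmt_14_general δ A B k
end

section
/- For every i with 0 ≤ i ≤ n, the LCS length of A[1..n] and B[1..m] equals the maximum over 0 ≤ j ≤ m of L(i, j) + L'(i, j), where L(i, j) is the LCS length of A[1..i] and B[1..j] and L'(i, j) is the LCS length of A[i+1..n] and B[j+1..m]. -/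
open List

/-- The length of a longest common subsequence of X and Y. -/
noncomputable def lcsLen (X Y : List ℝ) : ℕ :=
  sSup {k : ℕ | ∃ S : List ℝ, S.length = k ∧ S <+ X ∧ S <+ Y}

lemma lcs_bdd (X Y : List ℝ) :
    BddAbove {k : ℕ | ∃ S : List ℝ, S.length = k ∧ S <+ X ∧ S <+ Y} :=
  ⟨X.length, fun _ ⟨S, h1, h2, _⟩ => h1 ▸ h2.length_le⟩

lemma le_lcsLen {X Y S : List ℝ} (h1 : S <+ X) (h2 : S <+ Y) :
    S.length ≤ lcsLen X Y :=
  le_csSup (lcs_bdd X Y) ⟨S, rfl, h1, h2⟩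

lemma lcsLen_spec (X Y : List ℝ) :
    ∃ S : List ℝ, S.length = lcsLen X Y ∧ S <+ X ∧ S <+ Y := by
  have hne : {k : ℕ | ∃ S : List ℝ, S.length = k ∧ S <+ X ∧ S <+ Y}.Nonempty :=
    ⟨0, [], rfl, nil_sublist _, nil_sublist _⟩
  exact Nat.sSup_mem hne (lcs_bdd X Y)

/-- Hirschberg's decomposition: for every 0 ≤ i ≤ n, the LCS length of A
and B equals the maximum over 0 ≤ j ≤ m of L(i,j) + L'(i,j), where L(i,j) is the LCS
length of A[1..i], B[1..j] and L'(i,j) that of A[i+1..n], B[j+1..m]. -/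
theorem stmt_18 (A B : List ℝ) (i : ℕ) (hi : i ≤ A.length) :
    lcsLen A B =
    (Finset.range (B.length + 1)).sup
      (fun j => lcsLen (A.take i) (B.take j) + lcsLen (A.drop i) (B.drop j)) := by
  apply _root_.le_antisymm
  · obtain ⟨S, hlen, hA, hB⟩ := lcsLen_spec A B
    rw [← take_append_drop i A, sublist_append_iff] at hA
    obtain ⟨S₁, S₂, rfl, h1, h2⟩ := hA
    rw [append_sublist_iff] at hB
    obtain ⟨B₁, B₂, hBsplit, hb1, hb2⟩ := hB
    have hj : B₁.length ≤ B.length := by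
      rw [hBsplit]; simp
    have ht : B.take B₁.length = B₁ := by rw [hBsplit]; simp
    have hd : B.drop B₁.length = B₂ := by rw [hBsplit]; simp
    calc lcsLen A B = S₁.length + S₂.length := by rw [← hlen, length_append]
      _ ≤ lcsLen (A.take i) (B.take B₁.length) + lcsLen (A.drop i) (B.drop B₁.length) := by
          rw [ht, hd]; exact Nat.add_le_add (le_lcsLen h1 hb1) (le_lcsLen h2 hb2)
      _ ≤ _ := Finset.le_sup (f := fun j => lcsLen (A.take i) (B.take j) + lcsLen (A.drop i) (B.drop j)) (Finset.mem_range.mpr (Nat.lt_succ_of_le hj))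
  · apply Finset.sup_le
    intro j _
    obtain ⟨S₁, h1, hA1, hB1⟩ := lcsLen_spec (A.take i) (B.take j)
    obtain ⟨S₂, h2, hA2, hB2⟩ := lcsLen_spec (A.drop i) (B.drop j)
    have hA : S₁ ++ S₂ <+ A := by
      conv_rhs => rw [← take_append_drop i A]
      exact hA1.append hA2
    have hB : S₁ ++ S₂ <+ B := by
      conv_rhs => rw [← take_append_drop j B]
      exact hB1.append hB2
    calc lcsLen (A.take i) (B.take j) + lcsLen (A.drop i) (B.drop j)
        = (S₁ ++ S₂).length := by rw [length_append, h1, h2]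
      _ ≤ lcsLen A B := le_lcsLen hA hB
end

section
/- Removing from B[1..j] all elements strictly larger than a threshold w does not decrease the maximum length of a δ-almost increasing common subsequence of A[1..i] and B[1..j] among those subsequences whose elements are all at most w. -/
open List

/-- removing from B[1..j] all elements strictly larger than a threshold w
does not decrease the maximum length of a δ-almost increasing common subsequence of
A[1..i] and B[1..j] among those whose elements are all at most w. -/
theorem stmt_19 (δ : ℝ) (hδ : 0 < δ) (A B : List ℝ) (i j : ℕ) (w : ℝ) :
    sSup {k : ℕ | ∃ S : List ℝ, S.length = k ∧ DeltaAlmostIncreasing δ S ∧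
        S <+ A.take i ∧ S <+ B.take j ∧ ∀ x ∈ S, x ≤ w} ≤
    sSup {k : ℕ | ∃ S : List ℝ, S.length = k ∧ DeltaAlmostIncreasing δ S ∧
        S <+ A.take i ∧ S <+ (B.take j).filter (fun x => x ≤ w) ∧ ∀ x ∈ S, x ≤ w} := by
  have hsub : {k : ℕ | ∃ S : List ℝ, S.length = k ∧ DeltaAlmostIncreasing δ S ∧
        S <+ A.take i ∧ S <+ B.take j ∧ ∀ x ∈ S, x ≤ w} ⊆
      {k : ℕ | ∃ S : List ℝ, S.length = k ∧ DeltaAlmostIncreasing δ S ∧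
        S <+ A.take i ∧ S <+ (B.take j).filter (fun x => x ≤ w) ∧ ∀ x ∈ S, x ≤ w} := by
    rintro k ⟨S, hlen, hinc, hA, hB, hw⟩
    refine ⟨S, hlen, hinc, hA, ?_, hw⟩
    have h1 : S.filter (fun x => x ≤ w) <+ (B.take j).filter (fun x => x ≤ w) :=
      hB.filter _
    rwa [List.filter_eq_self.mpr (fun x hx => by simpa using hw x hx)] at h1
  have hbdd : BddAbove {k : ℕ | ∃ S : List ℝ, S.length = k ∧ DeltaAlmostIncreasing δ S ∧
        S <+ A.take i ∧ S <+ (B.take j).filter (fun x => x ≤ w) ∧ ∀ x ∈ S, x ≤ w} := by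
    refine ⟨(A.take i).length, ?_⟩
    rintro k ⟨S, hlen, _, hA, _, _⟩
    exact hlen ▸ hA.length_le
  rcases Set.eq_empty_or_nonempty {k : ℕ | ∃ S : List ℝ, S.length = k ∧
      DeltaAlmostIncreasing δ S ∧ S <+ A.take i ∧ S <+ B.take j ∧ ∀ x ∈ S, x ≤ w} with h | h
  · simp [h]
  · exact csSup_le_csSup hbdd h hsub
end
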